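/- Let S and C be real symmetric n×n matrices with |c_{ij}| ≤ s_{ij} for all i,j, and 0 ≤ γ ≤ 1. Then the 2n×2n matrix M_γ with 2×2 blocks [[ (s_{ij}+γc_{ij})/2, (s_{ij}−γc_{ij})/2 ],[ (s_{ij}−γc_{ij})/2, (s_{ij}+γc_{ij})/2 ]] is a symmetric nonnegative matrix whose eigenvalue multiset is σ(S) ∪ γ·σ(C). -/

import Mathlib

/-!
Listing the indices as two copies of `Fin n` turns `M` into the block matrix `[[A, B], [B, A]]`
with `A + B = S` and `A - B = γ C`. Conjugating by `[[1, 1], [0, 1]]` makes it block triangular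
with diagonal blocks `A + B` and `A - B`, so `χ_M = χ_S · χ_{γC}`, and the roots of `χ_{γC}` are
`γ` times those of `χ_C`. Nonnegativity of the entries is `|γ c_ij| ≤ |c_ij| ≤ s_ij`.
-/

open Matrix Polynomial

namespace Matrix

variable {n : Type*} [Fintype n] [DecidableEq n]

theorem charpoly_fromBlocks_self {R : Type*} [CommRing R] (A B : Matrix n n R) :
    (fromBlocks A B B A).charpoly = (A + B).charpoly * (A - B).charpoly := by
  set U : Matrix (n ⊕ n) (n ⊕ n) R := fromBlocks 1 1 0 1
  set V : Matrix (n ⊕ n) (n ⊕ n) R := fromBlocks 1 (-1) 0 1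
  have hVU : V * U = 1 := by simp [U, V, fromBlocks_multiply, ← fromBlocks_one]
  have hconj : U * fromBlocks A B B A * V = fromBlocks (A + B) 0 B (A - B) := by
    simp only [U, V, fromBlocks_multiply]
    simp only [Matrix.one_mul, Matrix.zero_mul, Matrix.mul_one, Matrix.mul_zero, Matrix.mul_neg,
      add_zero, zero_add]
    congr 1 <;> abel
  calc (fromBlocks A B B A).charpoly = (V * U * fromBlocks A B B A).charpoly := by
        rw [hVU, Matrix.one_mul]
    _ = (U * fromBlocks A B B A * V).charpoly := by
        rw [Matrix.mul_assoc, charpoly_mul_comm, Matrix.mul_assoc]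
    _ = (A + B).charpoly * (A - B).charpoly := by
        rw [hconj, charpoly_fromBlocks_zero₁₂]

theorem charpoly_of_apply_prod_fin_two {R : Type*} [CommRing R]
    {M : Matrix (n × Fin 2) (n × Fin 2) R} (A B : Matrix n n R)
    (hM : ∀ i j p q, M (i, p) (j, q) = if p = q then A i j else B i j) :
    M.charpoly = (A + B).charpoly * (A - B).charpoly := by
  let e : n × Fin 2 ≃ n ⊕ n :=
    (Equiv.prodComm _ _).trans ((finTwoEquiv.prodCongr (Equiv.refl n)).trans
      (Equiv.boolProdEquivSum n))
  have hre : reindex e e M = fromBlocks A B B A := by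
    ext (i | i) (j | j) <;> simp [e, hM]
  rw [← charpoly_reindex e, hre, charpoly_fromBlocks_self]

theorem charpoly_smul {K : Type*} [Field K] (A : Matrix n n K) {r : K} (hr : r ≠ 0) :
    (r • A).charpoly = C (r ^ Fintype.card n) * A.charpoly.comp (C r⁻¹ * X) := by
  have hmat : charmatrix (r • A) = C r • (compRingHom (C r⁻¹ * X)).mapMatrix (charmatrix A) := by
    ext i j : 1
    rcases eq_or_ne i j with rfl | hij
    · simp only [charmatrix_apply_eq, smul_apply, smul_eq_mul, map_mul, RingHom.mapMatrix_apply,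
        coe_compRingHom, map_apply, sub_comp, X_comp, C_comp]
      rw [mul_sub, ← mul_assoc, ← C_mul (b := r⁻¹), mul_inv_cancel₀ hr, C_1, one_mul]
    · simp [charmatrix_apply_ne _ _ _ hij]
  rw [charpoly, hmat, det_smul, ← RingHom.map_det, C_pow]
  rfl

theorem roots_charpoly_smul {K : Type*} [Field K] (A : Matrix n n K) (hA : A.charpoly.Splits)
    (r : K) : (r • A).charpoly.roots = A.charpoly.roots.map (r * ·) := by
  rcases eq_or_ne r 0 with rfl | hr
  · -- both sides are `card n` copies of `0`
    have hcard : Multiset.card A.charpoly.roots = Fintype.card n := by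
      rw [splits_iff_card_roots.mp hA, charpoly_natDegree_eq_dim]
    simp [charpoly_zero, hcard, Multiset.map_const', Multiset.nsmul_singleton]
  · rw [charpoly_smul A hr, roots_C_mul _ (by simpa using pow_ne_zero _ hr),
      ← add_zero (C r⁻¹ * X), ← C_0,
      roots_comp_C_mul_X_add_C _ _ _ (isUnit_iff_ne_zero.mpr (inv_ne_zero hr))]
    simp [Ring.inverse_eq_inv']

end Matrix

/-- for symmetric S, C with |c_{ij}| ≤ s_{ij} and 0 ≤ γ ≤ 1, the block
matrix M_γ is symmetric, nonnegative, with eigenvalue multiset σ(S) ∪ γ·σ(C). -/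
theorem stmt7 (n : ℕ) (s c : Fin n → Fin n → ℝ)
    (hs : ∀ i j, s i j = s j i) (hc : ∀ i j, c i j = c j i)
    (h : ∀ i j, |c i j| ≤ s i j) (γ : ℝ) (h0 : 0 ≤ γ) (h1 : γ ≤ 1)
    (M : Matrix (Fin n × Fin 2) (Fin n × Fin 2) ℝ)
    (hM : ∀ (i j : Fin n) (p q : Fin 2), M (i, p) (j, q) =
      if p = q then (s i j + γ * c i j) / 2 else (s i j - γ * c i j) / 2) :
    M.IsSymm ∧ (∀ u v, 0 ≤ M u v) ∧
      (M.map Complex.ofReal).charpoly.roots =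
        ((Matrix.of s).map Complex.ofReal).charpoly.roots +
          Multiset.map (fun z => (γ : ℂ) * z)
            ((Matrix.of c).map Complex.ofReal).charpoly.roots := by
  refine ⟨?_, ?_, ?_⟩
  · ext ⟨i, p⟩ ⟨j, q⟩
    rw [transpose_apply, hM, hM, hs j i, hc j i]
    simp only [eq_comm]
  · rintro ⟨i, p⟩ ⟨j, q⟩
    have hγc : |γ * c i j| ≤ s i j := by
      rw [abs_mul, abs_of_nonneg h0]
      exact (mul_le_of_le_one_left (abs_nonneg _) h1).trans (h i j)
    rw [hM]
    split_ifs <;> linarith [abs_le.mp hγc]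
  · set A : Matrix (Fin n) (Fin n) ℝ := of fun i j => (s i j + γ * c i j) / 2
    set B : Matrix (Fin n) (Fin n) ℝ := of fun i j => (s i j - γ * c i j) / 2
    have hsum : A + B = of s := by
      ext i j
      simp only [A, B, Matrix.add_apply, of_apply]
      ring
    have hdiff : A - B = γ • of c := by
      ext i j
      simp only [A, B, Matrix.sub_apply, Matrix.smul_apply, of_apply, smul_eq_mul]
      ring
    have hmap : ∀ {ι : Type} [Fintype ι] [DecidableEq ι] (N : Matrix ι ι ℝ),
        (N.map Complex.ofReal).charpoly = N.charpoly.map Complex.ofRealHom :=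
      fun N => charpoly_map N Complex.ofRealHom
    rw [hmap, charpoly_of_apply_prod_fin_two A B hM, hsum, hdiff, Polynomial.map_mul, ← hmap,
      ← hmap, map_smul' _ _ _ Complex.ofReal_mul,
      roots_mul ((charpoly_monic _).mul (charpoly_monic _)).ne_zero,
      roots_charpoly_smul _ (IsAlgClosed.splits _)]
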